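/- Let (Q_k)_{k≥0} be a sequence of positive bounded operators on a Hilbert space h that is non-increasing (Q_{k+1} ≤ Q_k). If for all u in a dense subspace D of h the series ∑_{k=0}^∞ (1/(k+1)) ⟨u, Q_k u⟩ converges, then Q_k converges strongly to 0 as k → ∞. -/

import Mathlib

/-! On `D` the forms `re ⟪u, Q k u⟫` decrease to some `L ≥ 0`, and `L > 0` would make the given
series dominate `L` times the harmonic series; so they tend to `0`. A positive operator satisfies
`T ^ 2 ≤ ‖T‖ • T`, hence `‖T u‖ ^ 2 ≤ ‖T‖ re ⟪u, T u⟫`, and `0 ≤ Q k ≤ Q 0` gives `‖Q k‖ ≤ ‖Q 0‖`;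
thus `Q k u → 0` for `u ∈ D`. Finally the uniform bound makes `(Q k)` equicontinuous, and the set
of `u` with `Q k u → 0` is closed, so it contains the closure of `D`. -/

open Filter Topology RCLike

theorem Antitone.tendsto_zero_of_summable_one_div_succ_mul {a : ℕ → ℝ} (ha : Antitone a)
    (h0 : ∀ k, 0 ≤ a k) (hs : Summable fun k : ℕ => 1 / (k + 1 : ℝ) * a k) :
    Tendsto a atTop (𝓝 0) := by
  obtain ⟨L, hL⟩ : ∃ L, Tendsto a atTop (𝓝 L) :=
    ⟨_, tendsto_atTop_ciInf ha ⟨0, by rintro _ ⟨k, rfl⟩; exact h0 k⟩⟩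
  obtain rfl : L = 0 := by
    by_contra hL0
    have hharm : Summable fun k : ℕ => L * (1 / (k + 1 : ℝ)) :=
      hs.of_nonneg_of_le (fun k => mul_nonneg (ge_of_tendsto' hL h0) (by positivity))
        fun k => by rw [mul_comm]; gcongr; exact ha.le_of_tendsto hL k
    refine Real.not_summable_one_div_natCast ((summable_nat_add_iff 1).1 ?_)
    exact_mod_cast (summable_mul_left_iff hL0).1 hharm
  exact hL

theorem CStarAlgebra.sq_le_norm_smul_self {A : Type*} [CStarAlgebra A] [PartialOrder A]
    [StarOrderedRing A] {a : A} (ha : 0 ≤ a) : a ^ 2 ≤ ‖a‖ • a := by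
  nontriviality A
  have h := cfc_mono (a := a) (f := fun x : ℝ => x ^ 2) (g := fun x => ‖a‖ * x) fun x hx => by
    rw [sq]
    exact mul_le_mul_of_nonneg_right ((Real.le_norm_self x).trans (spectrum.norm_le_norm_of_mem hx))
      (spectrum_nonneg_of_nonneg ha hx)
  rwa [cfc_pow_id a 2, cfc_const_mul_id ‖a‖ a] at h

namespace ContinuousLinearMap

theorem tendsto_apply_zero_of_dense {𝕜 E F ι : Type*}
    [NontriviallyNormedField 𝕜] [SeminormedAddCommGroup E] [NormedSpace 𝕜 E]
    [SeminormedAddCommGroup F] [NormedSpace 𝕜 F] {l : Filter ι} {f : ι → E →L[𝕜] F} {C : ℝ}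
    (hf : ∀ i, ‖f i‖ ≤ C) {s : Set E} (hs : Dense s)
    (h : ∀ x ∈ s, Tendsto (fun i => f i x) l (𝓝 0)) (x : E) :
    Tendsto (fun i => f i x) l (𝓝 0) := by
  have hequi := ((NormedSpace.equicontinuous_TFAE f).out 5 1).mp (⟨C, hf⟩ : ∃ C, ∀ i, ‖f i‖ ≤ C)
  exact (hequi.isClosed_setOfPred_tendsto (f := fun _ => 0) continuous_const).closure_subset_iff.2
    h (hs x)

theorem le_of_forall_re_inner_le {𝕜 E : Type*} [RCLike 𝕜] [NormedAddCommGroup E]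
    [InnerProductSpace 𝕜 E] [CompleteSpace E] {S T : E →L[𝕜] E} (hS : IsSelfAdjoint S)
    (hT : IsSelfAdjoint T) (h : ∀ x, re (inner 𝕜 x (S x)) ≤ re (inner 𝕜 x (T x))) : S ≤ T := by
  refine (le_def S T).2 <| isPositive_def'.2 ⟨hT.sub hS, fun x => ?_⟩
  rw [reApplyInnerSelf_apply, inner_re_symm, sub_apply, inner_sub_right, map_sub, sub_nonneg]
  exact h x

theorem norm_apply_sq_le_of_nonneg {H : Type*} [NormedAddCommGroup H] [InnerProductSpace ℂ H]
    [CompleteSpace H] {T : H →L[ℂ] H} (hT : 0 ≤ T) (x : H) :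
    ‖T x‖ ^ 2 ≤ ‖T‖ * (inner ℂ x (T x)).re := by
  have h := ((le_def _ _).1 (CStarAlgebra.sq_le_norm_smul_self hT)).re_inner_nonneg_right x
  have hsymm : inner ℂ x (T (T x)) = inner ℂ (T x) (T x) :=
    (((nonneg_iff_isPositive T).1 hT).inner_left_eq_inner_right x (T x)).symm
  rw [sub_apply, inner_sub_right, map_sub, sq, mul_apply_eq_comp, hsymm, inner_self_eq_norm_sq,
    smul_apply, real_smul_eq_coe_smul (K := ℂ), inner_smul_right, re_ofReal_mul, sub_nonneg] at h
  exact h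

end ContinuousLinearMap

open ContinuousLinearMap

/-- A non-increasing sequence of positive bounded operators `Q k` on a
complex Hilbert space converges strongly to `0` provided the series
`∑ (1/(k+1)) ⟨u, Q_k u⟩` converges for all `u` in a dense subspace `D`. -/
theorem qds_strong_limit_zero
    {H : Type*} [NormedAddCommGroup H] [InnerProductSpace ℂ H] [CompleteSpace H]
    (Q : ℕ → H →L[ℂ] H)
    (hsa : ∀ k, IsSelfAdjoint (Q k))
    (hpos : ∀ k u, 0 ≤ (inner ℂ u (Q k u) : ℂ).re)
    (hmono : ∀ k u, ((inner ℂ u (Q (k + 1) u) : ℂ)).re ≤ ((inner ℂ u (Q k u) : ℂ)).re)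
    (D : Set H) (hD : Dense D)
    (hsum : ∀ u ∈ D,
      Summable (fun k : ℕ => (1 / (k + 1 : ℝ)) * ((inner ℂ u (Q k u) : ℂ)).re)) :
    ∀ u : H, Tendsto (fun k => Q k u) atTop (𝓝 0) := by
  have hQ_nonneg : ∀ k, 0 ≤ Q k := fun k =>
    le_of_forall_re_inner_le (.zero _) (hsa k) fun u => by simpa using hpos k u
  have hQ_anti : Antitone Q :=
    antitone_nat_of_succ_le fun k => le_of_forall_re_inner_le (hsa _) (hsa k) (hmono k)
  have hQ_norm : ∀ k, ‖Q k‖ ≤ ‖Q 0‖ := fun k =>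
    CStarAlgebra.norm_le_norm_of_nonneg_of_le (hQ_nonneg k) (hQ_anti k.zero_le)
  refine tendsto_apply_zero_of_dense hQ_norm hD fun u hu => ?_
  have hform : Tendsto (fun k => (inner ℂ u (Q k u)).re) atTop (𝓝 0) :=
    (antitone_nat_of_succ_le fun k => hmono k u).tendsto_zero_of_summable_one_div_succ_mul
      (fun k => hpos k u) (hsum u hu)
  have hbound : ∀ k, ‖Q k u‖ ≤ √(‖Q 0‖ * (inner ℂ u (Q k u)).re) := fun k =>
    Real.le_sqrt_of_sq_le <| (norm_apply_sq_le_of_nonneg (hQ_nonneg k) u).trans <|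
      mul_le_mul_of_nonneg_right (hQ_norm k) (hpos k u)
  exact squeeze_zero_norm hbound (by simpa using (hform.const_mul ‖Q 0‖).sqrt)
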